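/- arXiv:2209.11441 — 6 statements merged into one kernel-verified Lean document; each statement's English description precedes it below -/
import Mathlib

section
/- The Dirichlet convolution identity (I_1·J_d) ⋆ φ = J_{d+1} holds, where (I_1·J_d)(n) = n·J_d(n), φ is Euler's totient function, and ⋆ denotes Dirichlet convolution. -/
/-!
Pointwise multiplication by a completely multiplicative `f` with `f 1 = 1` is a ring
endomorphism of the Dirichlet ring, so `I_1 · J_d = I_1 · (μ ⋆ I_d) = (I_1 · μ) ⋆ I_{d+1}`.
Since `φ = μ ⋆ I_1` and `(I_1 · μ) ⋆ I_1 = I_1 · (μ ⋆ ζ) = ε`, the convolution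
`(I_1 · J_d) ⋆ φ` collapses to `μ ⋆ I_{d+1} = J_{d+1}`.
-/

/-- Jordan's totient `J_k(n) = ∑_{e ∣ n} μ(e) · (n/e)^k`, i.e. `J_k = μ ⋆ I_k`. -/
def jordan (k n : ℕ) : ℤ :=
  ∑ e ∈ n.divisors, ArithmeticFunction.moebius e * ((n / e : ℕ) : ℤ) ^ k

open scoped ArithmeticFunction.Moebius ArithmeticFunction.zeta

namespace ArithmeticFunction

section CompletelyMultiplicative

variable {R : Type*}

theorem pmul_mul_of_map_mul [CommSemiring R] {f : ArithmeticFunction R}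
    (hf : ∀ m n, f (m * n) = f m * f n) (g h : ArithmeticFunction R) :
    f.pmul (g * h) = f.pmul g * f.pmul h := by
  ext n
  rw [pmul_apply, mul_apply, mul_apply, Finset.mul_sum]
  refine Finset.sum_congr rfl fun x hx => ?_
  rw [pmul_apply, pmul_apply, ← (Nat.mem_divisorsAntidiagonal.mp hx).1, hf]
  ring

theorem pmul_one_of_map_one [MonoidWithZero R] {f : ArithmeticFunction R} (hf : f 1 = 1) :
    f.pmul 1 = 1 := by
  ext n
  rw [pmul_apply, one_apply]
  split_ifs with hn
  · rw [hn, hf, mul_one]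
  · rw [mul_zero]

theorem pmul_moebius_mul_self [CommRing R] {f : ArithmeticFunction R} (hf1 : f 1 = 1)
    (hf : ∀ m n, f (m * n) = f m * f n) : f.pmul μ * f = 1 := by
  calc f.pmul μ * f = f.pmul μ * f.pmul ζ := by rw [pmul_zeta]
    _ = f.pmul (μ * ζ) := (pmul_mul_of_map_mul hf _ _).symm
    _ = 1 := by rw [coe_moebius_mul_coe_zeta, pmul_one_of_map_one hf1]

end CompletelyMultiplicative

def totient : ArithmeticFunction ℕ :=
  ⟨Nat.totient, Nat.totient_zero⟩

theorem totient_apply {n : ℕ} : totient n = n.totient := rfl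

theorem coe_zeta_mul_totient : (ζ * totient : ArithmeticFunction ℕ) = .id := by
  ext n
  rw [← natCoe_nat ζ, coe_zeta_mul_apply, id_apply]
  exact Nat.sum_totient n

theorem totient_eq_moebius_mul_id {R : Type*} [Ring R] :
    (totient : ArithmeticFunction R) = μ * ArithmeticFunction.id := by
  calc (totient : ArithmeticFunction R) = μ * ζ * totient := by
        rw [coe_moebius_mul_coe_zeta, one_mul]
    _ = μ * ArithmeticFunction.id := by
        rw [mul_assoc, ← natCoe_mul, coe_zeta_mul_totient]

theorem natCoe_id_map_mul {R : Type*} [Semiring R] (m n : ℕ) :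
    (ArithmeticFunction.id : ArithmeticFunction R) (m * n) =
      (ArithmeticFunction.id : ArithmeticFunction R) m * ArithmeticFunction.id n := by
  simp only [natCoe_apply, id_apply, Nat.cast_mul]

theorem natCoe_id_pmul_pow {R : Type*} [Semiring R] (k : ℕ) :
    (ArithmeticFunction.id : ArithmeticFunction R).pmul (pow k) = pow (k + 1) := by
  ext n
  rcases eq_or_ne n 0 with rfl | hn
  · simp
  · simp [hn, pow_succ']

theorem id_pmul_moebius_mul_pow_mul_totient {R : Type*} [CommRing R] (d : ℕ) :
    (ArithmeticFunction.id : ArithmeticFunction R).pmul (μ * pow d) * totient =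
      μ * pow (d + 1) := by
  set I : ArithmeticFunction R :=
    ((ArithmeticFunction.id : ArithmeticFunction ℕ) : ArithmeticFunction R)
  rw [pmul_mul_of_map_mul natCoe_id_map_mul, natCoe_id_pmul_pow, totient_eq_moebius_mul_id]
  calc I.pmul μ * (pow (d + 1) : ArithmeticFunction R) * (μ * I)
      = (I.pmul μ * I) * (μ * pow (d + 1)) := by ring
    _ = μ * pow (d + 1) := by
        rw [pmul_moebius_mul_self (by simp) natCoe_id_map_mul, one_mul]

end ArithmeticFunction

open ArithmeticFunction

theorem jordan_eq_moebius_mul_pow (k n : ℕ) :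
    jordan k n = (μ * pow k : ArithmeticFunction ℤ) n := by
  rw [mul_apply, Nat.sum_divisorsAntidiagonal
    (fun a b => (μ : ArithmeticFunction ℤ) a * (pow k : ArithmeticFunction ℤ) b), jordan]
  refine Finset.sum_congr rfl fun e he => ?_
  have : n / e ≠ 0 := (Nat.div_pos (Nat.divisor_le he) (Nat.pos_of_mem_divisors he)).ne'
  simp [this]

theorem stmt4_general (d : ℕ) (n : ℕ) :
    ∑ k ∈ n.divisors, (k : ℤ) * jordan d k * (Nat.totient (n / k) : ℤ) = jordan (d + 1) n := by
  rw [jordan_eq_moebius_mul_pow, ← intCoe_int moebius, ← id_pmul_moebius_mul_pow_mul_totient,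
    mul_apply, ← Nat.sum_divisorsAntidiagonal (fun a b => (a : ℤ) * jordan d a * (b.totient : ℤ))]
  refine Finset.sum_congr rfl fun k _ => ?_
  simp [pmul_apply, jordan_eq_moebius_mul_pow, totient_apply]

/-- The Dirichlet convolution identity `(I_1 · J_d) ⋆ φ = J_{d+1}`: for every `n ≥ 1`,
`∑_{k ∣ n} k · J_d(k) · φ(n/k) = J_{d+1}(n)`, where `φ` is Euler's totient function. -/
theorem stmt4 (d : ℕ) (hd : 1 ≤ d) (n : ℕ) (hn : 1 ≤ n) :
    ∑ k ∈ n.divisors, (k : ℤ) * jordan d k * (Nat.totient (n / k) : ℤ) = jordan (d + 1) n :=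
  stmt4_general d n
end

section
/- Let n ≥ 2, let α_1,…,α_{n−1} ∈ [0,1), β > −1 real and A = ∏_{i=1}^{n−1}(1−α_i). Then for all T ≥ 1, the nested sum ∑_{k_1 ≤ T^{α_1}} ∑_{k_2 ≤ (T/k_1)^{α_2}} ⋯ ∑_{k_{n−1} ≤ (T/(k_1⋯k_{n−2}))^{α_{n−1}}} (k_1⋯k_{n−1})^β is bounded by a constant (depending on the α_i and β) times T^{(β+1)(1−A)}. -/
open scoped Classical



private lemma bern {p : ℝ} (hp0 : 0 < p) (hp1 : p ≤ 1) {x : ℝ} (hx : 1 ≤ x) :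
    p * x ^ (p - 1) ≤ x ^ p - (x - 1) ^ p := by
  have hx0 : (0:ℝ) < x := lt_of_lt_of_le one_pos hx
  have hs : (-1:ℝ) ≤ -(1 / x) := by
    have : 1 / x ≤ 1 := by
      rw [div_le_one hx0]; exact hx
    linarith
  have h := rpow_one_add_le_one_add_mul_self hs hp0.le hp1
  have h1 : 1 + -(1 / x) = (x - 1) / x := by field_simp; ring
  rw [h1, Real.div_rpow (by linarith) hx0.le] at h
  have hxp : (0:ℝ) < x ^ p := Real.rpow_pos_of_pos hx0 p
  have h2 := (div_le_iff₀ hxp).mp h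
  have h3 : x ^ (p - 1) = x ^ p / x := by
    rw [Real.rpow_sub hx0, Real.rpow_one]
  rw [h3]
  have : (1 + p * -(1 / x)) * x ^ p = x ^ p - p * (x ^ p / x) := by
    field_simp; ring
  linarith [this ▸ h2]

private lemma Icc_one_eq_map (N : ℕ) :
    Finset.Icc 1 N = (Finset.range N).map ⟨fun i => i + 1, add_left_injective 1⟩ := by
  ext x
  simp only [Finset.mem_Icc, Finset.mem_map, Finset.mem_range, Function.Embedding.coeFn_mk]
  constructor
  · rintro ⟨h1, h2⟩; exact ⟨x - 1, by omega, by omega⟩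
  · rintro ⟨i, hi, rfl⟩; omega

private lemma sum_rpow_le (γ : ℝ) (hγ : -1 < γ) :
    ∃ C : ℝ, 0 < C ∧ ∀ Y : ℝ, 1 ≤ Y →
      ∑ k ∈ Finset.Icc 1 ⌊Y⌋₊, (k : ℝ) ^ γ ≤ C * Y ^ (γ + 1) := by
  rcases le_or_gt 0 γ with h0 | h0
  · refine ⟨1, one_pos, fun Y hY => ?_⟩
    have hY0 : (0:ℝ) < Y := lt_of_lt_of_le one_pos hY
    have hfl : (⌊Y⌋₊ : ℝ) ≤ Y := Nat.floor_le hY0.le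
    have hterm : ∀ k ∈ Finset.Icc 1 ⌊Y⌋₊, (k : ℝ) ^ γ ≤ Y ^ γ := by
      intro k hk
      rw [Finset.mem_Icc] at hk
      exact Real.rpow_le_rpow (Nat.cast_nonneg k)
        (le_trans (Nat.cast_le.mpr hk.2) hfl) h0
    calc ∑ k ∈ Finset.Icc 1 ⌊Y⌋₊, (k : ℝ) ^ γ
        ≤ ∑ _k ∈ Finset.Icc 1 ⌊Y⌋₊, Y ^ γ := Finset.sum_le_sum hterm
      _ = (⌊Y⌋₊ : ℝ) * Y ^ γ := by
          rw [Finset.sum_const, Nat.card_Icc, nsmul_eq_mul]; norm_num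
      _ ≤ Y * Y ^ γ := by
          exact mul_le_mul_of_nonneg_right hfl (Real.rpow_nonneg hY0.le γ)
      _ = 1 * Y ^ (γ + 1) := by
          rw [one_mul, Real.rpow_add hY0, Real.rpow_one]; ring
  · set p := γ + 1 with hp
    have hp0 : 0 < p := by linarith
    have hp1 : p ≤ 1 := by linarith
    refine ⟨1 / p, by positivity, fun Y hY => ?_⟩
    have hY0 : (0:ℝ) < Y := lt_of_lt_of_le one_pos hY
    have hfl : (⌊Y⌋₊ : ℝ) ≤ Y := Nat.floor_le hY0.le
    set N := ⌊Y⌋₊ with hN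
    calc ∑ k ∈ Finset.Icc 1 N, (k : ℝ) ^ γ
        = ∑ i ∈ Finset.range N, ((i + 1 : ℕ) : ℝ) ^ γ := by
          rw [Icc_one_eq_map N, Finset.sum_map]; rfl
      _ ≤ ∑ i ∈ Finset.range N, (((i + 1 : ℕ) : ℝ) ^ p - ((i : ℕ) : ℝ) ^ p) / p := by
          refine Finset.sum_le_sum fun i _ => ?_
          rw [le_div_iff₀ hp0]
          have hb := bern hp0 hp1 (x := (i : ℝ) + 1) (by have : (0:ℝ) ≤ i := Nat.cast_nonneg i; linarith)
          have : ((i : ℝ) + 1) - 1 = (i : ℝ) := by ring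
          rw [this] at hb
          have hγp : γ = p - 1 := by rw [hp]; ring
          push_cast
          rw [hγp]
          linarith
      _ = ((N : ℝ) ^ p - ((0:ℕ) : ℝ) ^ p) / p := by
          rw [← Finset.sum_div, Finset.sum_range_sub (fun i => ((i : ℕ) : ℝ) ^ p) N]
      _ ≤ 1 / p * Y ^ p := by
          have h1 : ((0:ℕ) : ℝ) ^ p = 0 := by
            rw [Nat.cast_zero, Real.zero_rpow hp0.ne']
          have h2 : (N : ℝ) ^ p ≤ Y ^ p :=
            Real.rpow_le_rpow (Nat.cast_nonneg N) hfl hp0.le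
          rw [h1, sub_zero, div_mul_eq_mul_div, one_mul]
          gcongr


private lemma Iio_zero_fin (m : ℕ) : (Finset.Iio (0 : Fin (m + 1))) = ∅ := by
  ext j; simp

private lemma Iio_succ_fin (m : ℕ) (i : Fin m) :
    (Finset.Iio (i.succ) : Finset (Fin (m + 1))) =
      insert 0 ((Finset.Iio i).map ⟨Fin.succ, Fin.succ_injective m⟩) := by
  ext j
  simp only [Finset.mem_Iio, Finset.mem_insert, Finset.mem_map,
    Function.Embedding.coeFn_mk]
  induction j using Fin.cases with
  | zero => simp [Fin.succ_pos]
  | succ j' =>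
      simp only [Fin.succ_lt_succ_iff]
      constructor
      · intro h; exact Or.inr ⟨j', h, rfl⟩
      · rintro (h | ⟨a, ha, haj⟩)
        · exact absurd h (Fin.succ_ne_zero j')
        · rwa [← Fin.succ_injective m haj]

private lemma prod_Iio_succ_fin {m : ℕ} (f : Fin (m + 1) → ℝ) (i : Fin m) :
    ∏ j ∈ Finset.Iio i.succ, f j = f 0 * ∏ j ∈ Finset.Iio i, f j.succ := by
  rw [Iio_succ_fin, Finset.prod_insert, Finset.prod_map]
  · rfl
  · simp [Fin.succ_ne_zero]

private lemma helper_le {c x M e : ℝ} (hc : c ≤ x ^ e) (hx0 : 0 ≤ x) (he0 : 0 ≤ e)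
    (he1 : e ≤ 1) (hxM : x ≤ M) (hM : 1 ≤ M) : c ≤ M := by
  rcases le_or_gt 1 x with h | h
  · refine hc.trans (le_trans ?_ hxM)
    calc x ^ e ≤ x ^ (1:ℝ) := Real.rpow_le_rpow_of_exponent_le h he1
      _ = x := Real.rpow_one x
  · exact hc.trans ((Real.rpow_le_one hx0 h.le he0).trans hM)

private lemma one_le_prod_fin {m : ℕ} (k : Fin m → ℕ) (hk : ∀ i, 1 ≤ k i)
    (s : Finset (Fin m)) : (1:ℝ) ≤ ∏ j ∈ s, (k j : ℝ) := by
  have : ∏ j ∈ s, (1:ℝ) ≤ ∏ j ∈ s, (k j : ℝ) := by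
    refine Finset.prod_le_prod (fun j _ => zero_le_one) fun j _ => ?_
    exact_mod_cast hk j
  simpa using this

private lemma split_lemma {m : ℕ} (α : Fin (m + 1) → ℝ) (hα : ∀ i, 0 ≤ α i ∧ α i < 1)
    (β T : ℝ) (hT : 1 ≤ T) :
    ∑ k ∈ (Finset.Icc (fun _ => 1) (fun _ => ⌊T⌋₊) : Finset (Fin (m + 1) → ℕ)).filter
        (fun k => ∀ i, (k i : ℝ) ≤ (T / ∏ j ∈ Finset.Iio i, (k j : ℝ)) ^ α i),
      (∏ i, (k i : ℝ)) ^ β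
    = ∑ a ∈ ((Finset.Icc 1 ⌊T⌋₊).filter (fun a : ℕ => (a : ℝ) ≤ T ^ α 0) : Finset ℕ),
        ∑ k' ∈ (Finset.Icc (fun _ => 1) (fun _ => ⌊T / (a : ℝ)⌋₊) : Finset (Fin m → ℕ)).filter
          (fun k' => ∀ i, (k' i : ℝ) ≤ (T / (a : ℝ) / ∏ j ∈ Finset.Iio i, (k' j : ℝ)) ^ α i.succ),
        (a : ℝ) ^ β * (∏ i, (k' i : ℝ)) ^ β := by
  have hT0 : (0:ℝ) < T := lt_of_lt_of_le one_pos hT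
  rw [Finset.sum_sigma']
  refine Finset.sum_nbij' (i := fun k => ⟨k 0, Fin.tail k⟩) (j := fun p => Fin.cons p.1 p.2)
    ?_ ?_ ?_ ?_ ?_
  · -- forward membership
    intro k hk
    simp only [Finset.mem_filter, Finset.mem_Icc, Pi.le_def] at hk
    obtain ⟨⟨hk1, hk2⟩, hkc⟩ := hk
    have hk0T : (k 0 : ℝ) ≤ T ^ α 0 := by
      have h := hkc 0
      rwa [Iio_zero_fin, Finset.prod_empty, div_one] at h
    have hk0pos : (0:ℝ) < (k 0 : ℝ) := by exact_mod_cast hk1 0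
    have hk0leT : (k 0 : ℝ) ≤ T :=
      le_trans (by exact_mod_cast hk2 0 : (k 0 : ℝ) ≤ (⌊T⌋₊ : ℝ)) (Nat.floor_le hT0.le)
    have hTk0 : 1 ≤ T / (k 0 : ℝ) := by rw [le_div_iff₀ hk0pos, one_mul]; exact hk0leT
    have htail : ∀ i : Fin m,
        (k i.succ : ℝ) ≤ (T / (k 0 : ℝ) / ∏ j ∈ Finset.Iio i, (k j.succ : ℝ)) ^ α i.succ := by
      intro i
      have h := hkc i.succ
      rw [prod_Iio_succ_fin (fun j => (k j : ℝ)) i, ← div_div] at h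
      exact h
    have hQ : ∀ i : Fin m, (1:ℝ) ≤ ∏ j ∈ Finset.Iio i, (k j.succ : ℝ) :=
      fun i => one_le_prod_fin (fun j => k j.succ) (fun j => hk1 j.succ) _
    simp only [Finset.mem_sigma, Finset.mem_filter, Finset.mem_Icc, Pi.le_def, Fin.tail]
    refine ⟨⟨⟨hk1 0, hk2 0⟩, hk0T⟩, ⟨fun i => hk1 i.succ, fun i => ?_⟩, fun i => htail i⟩
    refine Nat.le_floor ?_
    refine helper_le (htail i) (by positivity) (hα i.succ).1 (hα i.succ).2.le
      (div_le_self (by positivity) (hQ i)) hTk0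
  · -- backward membership
    rintro ⟨a, k'⟩ hp
    simp only [Finset.mem_sigma, Finset.mem_filter, Finset.mem_Icc, Pi.le_def] at hp
    obtain ⟨⟨⟨ha1, ha2⟩, haT⟩, ⟨hk1, hk2⟩, hkc⟩ := hp
    have ha0 : (0:ℝ) < a := by exact_mod_cast ha1
    have haleT : (a : ℝ) ≤ T :=
      le_trans (by exact_mod_cast ha2 : (a : ℝ) ≤ (⌊T⌋₊ : ℝ)) (Nat.floor_le hT0.le)
    simp only [Finset.mem_filter, Finset.mem_Icc, Pi.le_def]
    refine ⟨⟨fun j => ?_, fun j => ?_⟩, fun j => ?_⟩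
    · induction j using Fin.cases with
      | zero => simpa using ha1
      | succ i => simpa using hk1 i
    · induction j using Fin.cases with
      | zero => simpa using ha2
      | succ i =>
          have h1 : k' i ≤ ⌊T / (a : ℝ)⌋₊ := hk2 i
          have hfl : ⌊T / (a : ℝ)⌋₊ ≤ ⌊T⌋₊ :=
            Nat.floor_le_floor (div_le_self hT0.le (by exact_mod_cast ha1))
          simpa using le_trans h1 hfl
    · induction j using Fin.cases with
      | zero =>
          rw [Iio_zero_fin, Finset.prod_empty, div_one]
          simpa using haT
      | succ i =>
          rw [prod_Iio_succ_fin (fun j => ((Fin.cons a k' : Fin (m + 1) → ℕ) j : ℝ)) i]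
          simp only [Fin.cons_zero, Fin.cons_succ]
          rw [← div_div]
          exact hkc i
  · intro k _
    exact Fin.cons_self_tail k
  · rintro ⟨a, k'⟩ _
    simp [Fin.tail_cons]
  · intro k _
    rw [Fin.prod_univ_succ (fun i => (k i : ℝ)),
      Real.mul_rpow (Nat.cast_nonneg _) (Finset.prod_nonneg fun i _ => Nat.cast_nonneg _)]
    rfl

private lemma key (m : ℕ) : ∀ (α : Fin m → ℝ), (∀ i, 0 ≤ α i ∧ α i < 1) → ∀ β : ℝ, -1 < β →
    ∃ C : ℝ, 0 < C ∧ ∀ T : ℝ, 1 ≤ T →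
      ∑ k ∈ (Finset.Icc (fun _ => 1) (fun _ => ⌊T⌋₊) : Finset (Fin m → ℕ)).filter
          (fun k => ∀ i, (k i : ℝ) ≤ (T / ∏ j ∈ Finset.Iio i, (k j : ℝ)) ^ α i),
        (∏ i, (k i : ℝ)) ^ β
      ≤ C * T ^ ((β + 1) * (1 - ∏ i, (1 - α i))) := by
  induction m with
  | zero =>
      intro α hα β hβ
      refine ⟨1, one_pos, fun T hT => ?_⟩
      calc ∑ k ∈ (Finset.Icc (fun _ => 1) (fun _ => ⌊T⌋₊) : Finset (Fin 0 → ℕ)).filter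
              (fun k => ∀ i, (k i : ℝ) ≤ (T / ∏ j ∈ Finset.Iio i, (k j : ℝ)) ^ α i),
            (∏ i, (k i : ℝ)) ^ β
          ≤ ∑ _k ∈ (Finset.Icc (fun _ => 1) (fun _ => ⌊T⌋₊) : Finset (Fin 0 → ℕ)).filter
              (fun k => ∀ i, (k i : ℝ) ≤ (T / ∏ j ∈ Finset.Iio i, (k j : ℝ)) ^ α i), (1:ℝ) :=
            Finset.sum_le_sum fun k _ => by simp
        _ ≤ 1 := by
            rw [Finset.sum_const, nsmul_eq_mul, mul_one]
            have : ((Finset.Icc (fun _ => 1) (fun _ => ⌊T⌋₊) : Finset (Fin 0 → ℕ)).filter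
                (fun k => ∀ i, (k i : ℝ) ≤ (T / ∏ j ∈ Finset.Iio i, (k j : ℝ)) ^ α i)).card ≤ 1 :=
              Finset.card_le_one.mpr fun a _ b _ => funext fun i => i.elim0
            exact_mod_cast this
        _ = 1 * T ^ ((β + 1) * (1 - ∏ i, (1 - α i))) := by
            rw [show (1 - ∏ i : Fin 0, (1 - α i)) = 0 by simp, mul_zero, Real.rpow_zero, mul_one]
  | succ m ih =>
      intro α hα β hβ
      obtain ⟨C', hC', hIH⟩ := ih (fun i => α i.succ) (fun i => hα i.succ) β hβ
      have hA'pos : 0 < ∏ i : Fin m, (1 - α i.succ) :=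
        Finset.prod_pos fun i _ => by linarith [(hα i.succ).2]
      have hβ1 : (0:ℝ) < β + 1 := by linarith
      have hγ : -1 < (β + 1) * (∏ i : Fin m, (1 - α i.succ)) - 1 := by
        have := mul_pos hβ1 hA'pos; linarith
      obtain ⟨C'', hC'', hSum⟩ := sum_rpow_le _ hγ
      refine ⟨C' * C'', mul_pos hC' hC'', fun T hT => ?_⟩
      have hT0 : (0:ℝ) < T := lt_of_lt_of_le one_pos hT
      have hY1 : (1:ℝ) ≤ T ^ α 0 := by
        calc (1:ℝ) = 1 ^ α 0 := (Real.one_rpow _).symm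
          _ ≤ T ^ α 0 := Real.rpow_le_rpow zero_le_one hT (hα 0).1
      have hTa : ∀ a ∈ ((Finset.Icc 1 ⌊T⌋₊).filter (fun a : ℕ => (a : ℝ) ≤ T ^ α 0) : Finset ℕ),
          1 ≤ T / (a : ℝ) := by
        intro a ha
        simp only [Finset.mem_filter, Finset.mem_Icc] at ha
        have ha0 : (0:ℝ) < a := by exact_mod_cast ha.1.1
        rw [le_div_iff₀ ha0, one_mul]
        exact le_trans (by exact_mod_cast ha.1.2 : (a : ℝ) ≤ (⌊T⌋₊ : ℝ)) (Nat.floor_le hT0.le)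
      rw [split_lemma α hα β T hT]
      calc ∑ a ∈ ((Finset.Icc 1 ⌊T⌋₊).filter (fun a : ℕ => (a : ℝ) ≤ T ^ α 0) : Finset ℕ),
            ∑ k' ∈ (Finset.Icc (fun _ => 1) (fun _ => ⌊T / (a : ℝ)⌋₊) : Finset (Fin m → ℕ)).filter
              (fun k' => ∀ i, (k' i : ℝ) ≤ (T / (a : ℝ) / ∏ j ∈ Finset.Iio i, (k' j : ℝ)) ^ α i.succ),
            (a : ℝ) ^ β * (∏ i, (k' i : ℝ)) ^ β
          ≤ ∑ a ∈ ((Finset.Icc 1 ⌊T⌋₊).filter (fun a : ℕ => (a : ℝ) ≤ T ^ α 0) : Finset ℕ),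
            (a : ℝ) ^ β * (C' * (T / (a : ℝ)) ^ ((β + 1) * (1 - ∏ i : Fin m, (1 - α i.succ)))) := by
            refine Finset.sum_le_sum fun a ha => ?_
            rw [← Finset.mul_sum]
            exact mul_le_mul_of_nonneg_left (hIH (T / (a : ℝ)) (hTa a ha))
              (Real.rpow_nonneg (Nat.cast_nonneg a) β)
        _ = C' * (T ^ ((β + 1) * (1 - ∏ i : Fin m, (1 - α i.succ))) *
              ∑ a ∈ ((Finset.Icc 1 ⌊T⌋₊).filter (fun a : ℕ => (a : ℝ) ≤ T ^ α 0) : Finset ℕ),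
                (a : ℝ) ^ ((β + 1) * (∏ i : Fin m, (1 - α i.succ)) - 1)) := by
            rw [Finset.mul_sum, Finset.mul_sum]
            refine Finset.sum_congr rfl fun a ha => ?_
            simp only [Finset.mem_filter, Finset.mem_Icc] at ha
            have ha0 : (0:ℝ) < a := by exact_mod_cast ha.1.1
            rw [Real.div_rpow hT0.le ha0.le,
              show (β + 1) * (∏ i : Fin m, (1 - α i.succ)) - 1
                = β - (β + 1) * (1 - ∏ i : Fin m, (1 - α i.succ)) by ring,
              Real.rpow_sub ha0]
            ring
        _ ≤ C' * (T ^ ((β + 1) * (1 - ∏ i : Fin m, (1 - α i.succ))) *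
              ∑ a ∈ Finset.Icc 1 ⌊T ^ α 0⌋₊,
                (a : ℝ) ^ ((β + 1) * (∏ i : Fin m, (1 - α i.succ)) - 1)) := by
            refine mul_le_mul_of_nonneg_left (mul_le_mul_of_nonneg_left ?_
              (Real.rpow_nonneg hT0.le _)) hC'.le
            refine Finset.sum_le_sum_of_subset_of_nonneg ?_
              (fun a _ _ => Real.rpow_nonneg (Nat.cast_nonneg a) _)
            intro a ha
            simp only [Finset.mem_filter, Finset.mem_Icc] at ha ⊢
            exact ⟨ha.1.1, Nat.le_floor ha.2⟩
        _ ≤ C' * (T ^ ((β + 1) * (1 - ∏ i : Fin m, (1 - α i.succ))) *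
              (C'' * (T ^ α 0) ^ ((β + 1) * (∏ i : Fin m, (1 - α i.succ)) - 1 + 1))) := by
            exact mul_le_mul_of_nonneg_left (mul_le_mul_of_nonneg_left
              (hSum (T ^ α 0) hY1) (Real.rpow_nonneg hT0.le _)) hC'.le
        _ = C' * C'' * T ^ ((β + 1) * (1 - ∏ i, (1 - α i))) := by
            rw [← Real.rpow_mul hT0.le]
            rw [show C' * (T ^ ((β + 1) * (1 - ∏ i : Fin m, (1 - α i.succ))) *
                (C'' * T ^ (α 0 * ((β + 1) * (∏ i : Fin m, (1 - α i.succ)) - 1 + 1))))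
              = C' * C'' * (T ^ ((β + 1) * (1 - ∏ i : Fin m, (1 - α i.succ))) *
                T ^ (α 0 * ((β + 1) * (∏ i : Fin m, (1 - α i.succ)) - 1 + 1))) from by ring]
            rw [← Real.rpow_add hT0]
            congr 1
            rw [Fin.prod_univ_succ (fun i => 1 - α i)]
            ring

/-- Let `n ≥ 2`, `α_1, …, α_{n-1} ∈ [0,1)`, `β > -1` and `A = ∏ (1 - α_i)`. Then for all
`T ≥ 1`, the nested sum `∑_{k_1 ≤ T^{α_1}} ⋯ ∑_{k_{n-1} ≤ (T/(k_1⋯k_{n-2}))^{α_{n-1}}}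
(k_1⋯k_{n-1})^β` (over positive integers `k_i`) is at most a constant (depending only on
the `α_i` and `β`) times `T^{(β+1)(1-A)}`. -/
theorem stmt8 (n : ℕ) (hn : 2 ≤ n) (α : Fin (n - 1) → ℝ)
    (hα : ∀ i, 0 ≤ α i ∧ α i < 1) (β : ℝ) (hβ : -1 < β) :
    ∃ C : ℝ, 0 < C ∧ ∀ T : ℝ, 1 ≤ T →
      ∑ k ∈ (Finset.Icc (fun _ => 1) (fun _ => ⌊T⌋₊) : Finset (Fin (n - 1) → ℕ)).filter
          (fun k => ∀ i, (k i : ℝ) ≤ (T / ∏ j ∈ Finset.Iio i, (k j : ℝ)) ^ α i),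
        (∏ i, (k i : ℝ)) ^ β
      ≤ C * T ^ ((β + 1) * (1 - ∏ i, (1 - α i))) :=
  key (n - 1) α hα β hβ
end

section
/- Let K be an algebraically closed field, u ∈ ℤ^n, and z ∈ K*. The Laurent polynomial X^u − z = X_1^{u_1}⋯X_n^{u_n} − z in K[X_1^{±1},…,X_n^{±1}] is irreducible if and only if u is primitive (the gcd of its entries is 1) (in particular u ≠ 0). -/
/-!
If `u = d • w` with `d ≥ 2`, then `X^u - z` is the image of the reducible polynomial
`Y^d - z ∈ K[Y]` under `Y ↦ X^w`. Its factors stay non-units: each has a root `s ≠ 0`, and since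
`K^×` is divisible some character of `ℤ^n` sends `X^w` to `s`, killing the factor.

Conversely, if `c u = 1` for a linear form `c`, the substitution `X^g ↦ z^{c g} X^{g - (c g) u}`
is an endomorphism congruent to the identity modulo `X^u - z` and killing it; so its kernel is
exactly `(X^u - z)`, and this ideal is prime because the Laurent polynomial ring is a domain.
-/

open AddMonoidAlgebra Polynomial

section Retract

variable {R G : Type*} [CommRing R] [AddCommGroup G]

noncomputable def retractMonoidHom (c : G →+ ℤ) (u : G) (z : Rˣ) :
    Multiplicative G →* AddMonoidAlgebra R G where
  toFun g := single (g.toAdd - c g.toAdd • u) ↑(z ^ c g.toAdd)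
  map_one' := by simp [one_def]
  map_mul' a b := by
    simp only [toAdd_mul, map_add, single_mul_single, add_smul, zpow_add, Units.val_mul]
    congr 1
    abel

noncomputable def retract (c : G →+ ℤ) (u : G) (z : Rˣ) :
    AddMonoidAlgebra R G →ₐ[R] AddMonoidAlgebra R G :=
  lift R (AddMonoidAlgebra R G) G (retractMonoidHom c u z)

variable {c : G →+ ℤ} {u : G} {z : Rˣ}

theorem retract_single (g : G) (r : R) :
    retract c u z (single g r) = single (g - c g • u) (r * ↑(z ^ c g)) :=
  (lift_single _ _ _).trans (smul_single' _ _ _)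

theorem retract_single_of_eq_zero {g : G} (hg : c g = 0) :
    retract c u z (single g 1) = single g 1 := by
  simp [retract_single, hg]

theorem retract_single_sub_single (hu : c u = 1) :
    retract c u z (single u 1 - single 0 (z : R)) = 0 := by
  simp [retract_single, hu]

theorem mkₐ_comp_retract (hu : c u = 1) :
    (Ideal.Quotient.mkₐ R (Ideal.span {single u 1 - single 0 (z : R)})).comp (retract c u z) =
      Ideal.Quotient.mkₐ R (Ideal.span {single u 1 - single 0 (z : R)}) := by
  -- `ofAdd g = ofAdd (g - c g • u) * (ofAdd u) ^ c g`, and both factors lie in the equaliser.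
  set I := Ideal.span {single u 1 - single 0 (z : R)}
  set π := Ideal.Quotient.mkₐ R I
  let E := (((π.comp (retract c u z)) : AddMonoidAlgebra R G →* AddMonoidAlgebra R G ⧸ I).comp
    (of R G)).eqLocus ((π : AddMonoidAlgebra R G →* AddMonoidAlgebra R G ⧸ I).comp (of R G))
  have hker {w : G} (hw : c w = 0) : Multiplicative.ofAdd w ∈ E := by
    change π (retract c u z (single w 1)) = π (single w 1)
    rw [retract_single_of_eq_zero hw]
  have hu_mem : Multiplicative.ofAdd u ∈ E := by
    change π (retract c u z (single u 1)) = π (single u 1)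
    rw [Ideal.Quotient.mkₐ_eq_mk, Ideal.Quotient.eq, retract_single, hu]
    simpa using I.neg_mem (Ideal.mem_span_singleton_self _)
  refine algHom_ext (fun g => ?_) (Subsingleton.elim _ _)
  have hg : Multiplicative.ofAdd g ∈ E := by
    have := E.mul_mem (hker (w := g - c g • u) (by simp [hu])) (E.zpow_mem hu_mem (c g))
    simpa [← ofAdd_zsmul, ← ofAdd_add] using this
  exact hg

theorem dvd_sub_retract (hu : c u = 1) (f : AddMonoidAlgebra R G) :
    single u 1 - single 0 (z : R) ∣ f - retract c u z f := by
  rw [← Ideal.mem_span_singleton, ← Ideal.Quotient.eq, ← Ideal.Quotient.mkₐ_eq_mk R,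
    ← AlgHom.comp_apply, mkₐ_comp_retract hu]

theorem prime_single_sub_single [Nontrivial R] [NoZeroDivisors (AddMonoidAlgebra R G)]
    (hu : c u = 1) : Prime (single u 1 - single 0 (z : R)) := by
  have dvd_of_retract_eq_zero {f : AddMonoidAlgebra R G} (hf : retract c u z f = 0) :
      single u 1 - single 0 (z : R) ∣ f := by
    simpa [hf] using dvd_sub_retract (z := z) hu f
  refine ⟨fun h => ?_, fun h => ?_, fun a b ⟨q, hab⟩ => ?_⟩
  · have hu0 : u ≠ 0 := by rintro rfl; simp at hu
    simp [sub_eq_zero, single_inj, hu0] at h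
  · simpa [retract_single_sub_single hu] using h.map (retract c u z)
  · have : retract c u z a * retract c u z b = 0 := by
      rw [← map_mul, hab, map_mul, retract_single_sub_single hu, zero_mul]
    exact (mul_eq_zero.mp this).imp dvd_of_retract_eq_zero dvd_of_retract_eq_zero

end Retract

theorem exists_addMonoidHom_apply_eq_one {ι : Type*} [Fintype ι] {u : ι → ℤ}
    (hu : Finset.univ.gcd u = 1) : ∃ c : (ι → ℤ) →+ ℤ, c u = 1 := by
  obtain ⟨a, ha⟩ := Finset.univ.gcd_eq_sum_mul u
  refine ⟨AddMonoidHom.mk' (fun v => ∑ i, v i * a i) fun v w => ?_, ?_⟩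
  · simp [add_mul, Finset.sum_add_distrib]
  · simp [← ha, hu]

theorem not_irreducible_single_zero {K G : Type*} [Field K] [AddMonoid G] (r : K) :
    ¬Irreducible (single 0 r : AddMonoidAlgebra K G) := by
  rcases eq_or_ne r 0 with rfl | hr
  · simp
  · exact fun h => h.not_isUnit (hr.isUnit.map singleZeroRingHom)

theorem exists_eq_natAbs_gcd_nsmul {ι : Type*} [Fintype ι] (u : ι → ℤ) :
    ∃ w : ι → ℤ, u = (Finset.univ.gcd u).natAbs • w := by
  have hgcd : 0 ≤ Finset.univ.gcd u := Int.nonneg_of_normalize_eq_self Finset.normalize_gcd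
  refine ⟨fun i => u i / Finset.univ.gcd u, funext fun i => ?_⟩
  simp [Int.natAbs_of_nonneg hgcd, Int.mul_ediv_cancel' (Finset.gcd_dvd (Finset.mem_univ i))]

section AlgClosed

variable {K : Type*} [Field K] [IsAlgClosed K]

theorem IsAlgClosed.exists_units_zpow_eq (s : Kˣ) {k : ℤ} (hk : k ≠ 0) :
    ∃ t : Kˣ, t ^ k = s := by
  obtain ⟨r, hr⟩ := IsAlgClosed.exists_pow_nat_eq (s : K) (Int.natAbs_pos.mpr hk)
  have hr0 : r ≠ 0 := by
    rintro rfl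
    exact s.ne_zero (by rw [← hr, zero_pow (Int.natAbs_ne_zero.mpr hk)])
  have ht : Units.mk0 r hr0 ^ k.natAbs = s := Units.ext (by simpa using hr)
  rcases Int.natAbs_eq k with h | h
  · exact ⟨Units.mk0 r hr0, by rw [h, zpow_natCast, ht]⟩
  · exact ⟨(Units.mk0 r hr0)⁻¹, by rw [h, zpow_neg, inv_zpow, inv_inv, zpow_natCast, ht]⟩

variable {ι : Type*} {v : ι → ℤ}

theorem exists_algHom_single_eq (hv : v ≠ 0) (s : Kˣ) :
    ∃ φ : AddMonoidAlgebra K (ι → ℤ) →ₐ[K] K, φ (single v 1) = s := by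
  obtain ⟨i, hi⟩ := Function.ne_iff.mp hv
  obtain ⟨t, ht⟩ := IsAlgClosed.exists_units_zpow_eq s hi
  refine ⟨lift K K (ι → ℤ) ((Units.coeHom K).comp
    ((zpowersHom Kˣ t).comp (Pi.evalAddMonoidHom (fun _ => ℤ) i).toMultiplicative)), ?_⟩
  simp [lift_single, ht]

theorem isUnit_of_isUnit_aeval_single (hv : v ≠ 0) {q : K[X]} (hq : q.eval 0 ≠ 0)
    (h : IsUnit (aeval (single v 1 : AddMonoidAlgebra K (ι → ℤ)) q)) : IsUnit q := by
  by_contra hq_unit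
  obtain ⟨s, hs⟩ := IsAlgClosed.exists_root q (mt isUnit_iff_degree_eq_zero.mpr hq_unit)
  have hs0 : s ≠ 0 := by rintro rfl; exact hq hs
  obtain ⟨φ, hφ⟩ := exists_algHom_single_eq hv (Units.mk0 s hs0)
  have := h.map φ
  rw [← aeval_algHom_apply, hφ, Units.val_mk0, coe_aeval_eq_eval, hs.eq_zero] at this
  exact not_isUnit_zero this

theorem irreducible_of_irreducible_aeval_single (hv : v ≠ 0) {p : K[X]} (hp : p.eval 0 ≠ 0)
    (h : Irreducible (aeval (single v 1 : AddMonoidAlgebra K (ι → ℤ)) p)) : Irreducible p := by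
  refine ⟨fun hu => h.not_isUnit (hu.map _), fun a b hab => ?_⟩
  rw [hab, eval_mul] at hp
  exact (h.isUnit_or_isUnit (by rw [hab, map_mul])).imp
    (isUnit_of_isUnit_aeval_single hv (left_ne_zero_of_mul hp))
    (isUnit_of_isUnit_aeval_single hv (right_ne_zero_of_mul hp))

end AlgClosed

theorem gcd_eq_one_of_irreducible_single_sub_single {K ι : Type*} [Field K] [IsAlgClosed K]
    [Fintype ι] {u : ι → ℤ} {z : Kˣ}
    (h : Irreducible (single u 1 - single 0 (z : K) : AddMonoidAlgebra K (ι → ℤ))) :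
    Finset.univ.gcd u = 1 := by
  have hu : u ≠ 0 := by
    rintro rfl
    exact not_irreducible_single_zero _ (by rwa [← single_sub] at h)
  obtain ⟨w, hudw⟩ := exists_eq_natAbs_gcd_nsmul u
  set d := (Finset.univ.gcd u).natAbs
  have hw0 : w ≠ 0 := by rintro rfl; exact hu (by rw [hudw, smul_zero])
  have hd0 : d ≠ 0 := by rintro hd; exact hu (by rw [hudw, hd, zero_smul])
  have hP : single u 1 - single 0 (z : K) =
      aeval (single w 1 : AddMonoidAlgebra K (ι → ℤ)) (X ^ d - C (z : K)) := by
    simp [single_pow, hudw]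
  have hirr := irreducible_of_irreducible_aeval_single hw0 (by simp [zero_pow hd0]) (hP ▸ h)
  have hd := natDegree_eq_of_degree_eq_some (IsAlgClosed.degree_eq_one_of_irreducible K hirr)
  rw [natDegree_X_pow_sub_C] at hd
  rw [← Int.natAbs_of_nonneg (Int.nonneg_of_normalize_eq_self Finset.normalize_gcd)]
  exact_mod_cast hd

/-- Let `K` be an algebraically closed field, `u ∈ ℤ^n` and `z ∈ K*`. The Laurent
polynomial `X^u - z ∈ K[X_1^{±1}, …, X_n^{±1}]` (the Laurent polynomial ring being the
group algebra of `ℤ^n` over `K`) is irreducible if and only if `u` is primitive,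
i.e. the gcd of its entries is `1`. -/
theorem stmt10 (K : Type*) [Field K] [IsAlgClosed K] (n : ℕ) (u : Fin n → ℤ) (z : Kˣ) :
    Irreducible (AddMonoidAlgebra.single u (1 : K) -
        AddMonoidAlgebra.single (0 : Fin n → ℤ) (z : K) : AddMonoidAlgebra K (Fin n → ℤ))
      ↔ Finset.univ.gcd u = 1 := by
  refine ⟨gcd_eq_one_of_irreducible_single_sub_single, fun h => ?_⟩
  obtain ⟨c, hc⟩ := exists_addMonoidHom_apply_eq_one h
  exact (prime_single_sub_single hc).irreducible
end

section
/- Let K be a field, P ∈ K[X_1^{±1},…,X_n^{±1}] a nonzero Laurent polynomial, u ∈ ℤ^n \ {0}, and z ∈ K*. If the Laurent binomial X^u − z divides P, then there exist i, j in the support of P and a positive integer k such that k·u = i − j. -/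
/-!
Suppose no positive multiple of `u` is a difference of two exponents of `P`, and pick `c` in the
support of `P`. Then `c` is the only exponent of `P` on the line `c + ℤu`. Restricting
coefficients to that line and evaluating at `z` is a linear form `P ↦ ∑ₘ P_{c+mu} zᵐ` which kills
every multiple of `X^u - z` (the sum telescopes), yet sends `P` to `P_c ≠ 0`.
-/

open AddMonoidAlgebra Function

section LineEval

variable {R G : Type*} [CommRing R] [AddCommGroup G]

noncomputable def lineEval (P : AddMonoidAlgebra R G) (c u : G) (z : Rˣ) : R :=
  ∑ᶠ m : ℤ, P.coeff (c + m • u) * ↑(z ^ m)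

lemma hasFiniteSupport_coeff_line (P : AddMonoidAlgebra R G) {u : G}
    (hu : Injective fun m : ℤ => m • u) (c : G) :
    HasFiniteSupport fun m : ℤ => P.coeff (c + m • u) :=
  P.coeff.hasFiniteSupport.fun_comp_of_injective ((add_right_injective c).comp hu)

lemma coeff_single_sub_single_mul_line (Q : AddMonoidAlgebra R G) (c u : G) (z : R) (m : ℤ) :
    ((single u 1 - single 0 z) * Q).coeff (c + m • u) =
      Q.coeff (c + (m - 1) • u) - z * Q.coeff (c + m • u) := by
  rw [sub_mul, coeff_sub, Finsupp.sub_apply, coeff_single_mul_apply, coeff_single_mul_apply,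
    one_mul, neg_zero, zero_add, sub_smul, one_smul, neg_add_eq_sub, add_sub_assoc]

lemma lineEval_single_sub_single_mul (Q : AddMonoidAlgebra R G) {u : G}
    (hu : Injective fun m : ℤ => m • u) (c : G) (z : Rˣ) :
    lineEval ((single u 1 - single 0 (z : R)) * Q) c u z = 0 := by
  set a : ℤ → R := fun m => Q.coeff (c + m • u)
  have ha := hasFiniteSupport_coeff_line Q hu c
  have shift : ∑ᶠ m : ℤ, a (m - 1) * ↑(z ^ m) = ∑ᶠ m : ℤ, a m * ↑(z ^ (m + 1)) := by
    rw [← finsum_comp_equiv (Equiv.addRight (1 : ℤ))]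
    simp only [Equiv.coe_addRight, add_sub_cancel_right]
  calc lineEval ((single u 1 - single 0 (z : R)) * Q) c u z
      = ∑ᶠ m : ℤ, (a (m - 1) * ↑(z ^ m) - a m * ↑(z ^ (m + 1))) := by
        refine finsum_congr fun m => ?_
        rw [coeff_single_sub_single_mul_line, zpow_add_one, Units.val_mul]
        ring
    _ = 0 := by
        rw [finsum_sub_distrib, shift, sub_self]
        · exact (ha.fun_comp_of_injective (add_left_injective (-1 : ℤ))).fun_mul_left _
        · exact ha.fun_mul_left _

lemma lineEval_eq_coeff_of_forall_ne_zero {P : AddMonoidAlgebra R G} {c u : G} (z : Rˣ)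
    (h : ∀ m : ℤ, m ≠ 0 → P.coeff (c + m • u) = 0) : lineEval P c u z = P.coeff c := by
  rw [lineEval, finsum_eq_single _ 0 fun m hm => by rw [h m hm, zero_mul]]
  simp

end LineEval

lemma exists_pos_smul_eq_sub_of_mem {G : Type*} [AddCommGroup G] {s : Finset G} {c u : G}
    {m : ℤ} (hm : m ≠ 0) (hc : c ∈ s) (hcm : c + m • u ∈ s) :
    ∃ i ∈ s, ∃ j ∈ s, ∃ k : ℕ, 0 < k ∧ (k : ℤ) • u = i - j := by
  obtain ⟨k, rfl | rfl⟩ := Int.eq_nat_or_neg m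
  · exact ⟨_, hcm, c, hc, k, by omega, by abel⟩
  · exact ⟨c, hc, _, hcm, k, by omega, by rw [neg_smul]; abel⟩

/-- Let `K` be a field, `P` a nonzero Laurent polynomial in `n` variables (an element of
the group algebra of `ℤ^n` over `K`), `u ∈ ℤ^n \ {0}` and `z ∈ K*`. If `X^u - z` divides
`P`, then there exist `i, j` in the support of `P` and a positive integer `k` with
`k·u = i - j`. -/
theorem stmt11 (K : Type*) [Field K] (n : ℕ) (P : AddMonoidAlgebra K (Fin n → ℤ))
    (hP : P ≠ 0) (u : Fin n → ℤ) (hu : u ≠ 0) (z : Kˣ)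
    (hdvd : (AddMonoidAlgebra.single u (1 : K) -
        AddMonoidAlgebra.single (0 : Fin n → ℤ) (z : K)) ∣ P) :
    ∃ i ∈ P.coeff.support, ∃ j ∈ P.coeff.support, ∃ k : ℕ, 0 < k ∧ (k : ℤ) • u = i - j := by
  obtain ⟨Q, hPQ⟩ := hdvd
  obtain ⟨c, hc⟩ := Finsupp.support_nonempty_iff.mpr (coeff_eq_zero.not.mpr hP)
  by_contra hnone
  have hline : ∀ m : ℤ, m ≠ 0 → P.coeff (c + m • u) = 0 := fun m hm =>
    Finsupp.notMem_support_iff.mp fun hcm => hnone (exists_pos_smul_eq_sub_of_mem hm hc hcm)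
  have hPc : P.coeff c = 0 := by
    rw [← lineEval_eq_coeff_of_forall_ne_zero z hline, hPQ,
      lineEval_single_sub_single_mul Q (smul_left_injective ℤ hu)]
  exact Finsupp.mem_support_iff.mp hc hPc
end

section
/- Let P ∈ K[X_1^{±1},…,X_n^{±1}] be a Laurent polynomial over a field K, y ∈ (K*)^n, and u ∈ ℤ^n. If the one-variable Laurent polynomial Q(Y) = P(y_1 Y^{u_1},…, y_n Y^{u_n}) is nonzero, then Ldeg(Q) ≤ 2·|u|_∞·Ldeg(P). -/
/-!
Every exponent of `Q` is `⟪u, i⟫` for some exponent `i` of `P`, so `Ldeg Q = ⟪u, i - i'⟫` for two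
exponents `i, i'` of `P`. Writing `c` for the coordinatewise minimum of `Supp P`, each
`|i_j - i'_j|` is at most `(i_j - c_j) + (i'_j - c_j)`, and `∑_j (i_j - c_j) ≤ Ldeg P`; hence
`⟪u, i - i'⟫ ≤ |u|_∞ · 2 Ldeg P`.
-/

/-- The Laurent degree of a nonzero multivariate Laurent polynomial `P`: writing
`P = X^v · S` with `S` an ordinary polynomial coprime to `X_1⋯X_n`, it is `deg S`;
explicitly it equals `max_{i ∈ Supp P} ∑_j (i_j - min_{i' ∈ Supp P} i'_j)`. -/
noncomputable def LdegM {K : Type*} [Field K] {n : ℕ} (P : AddMonoidAlgebra K (Fin n → ℤ))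
    (h : P.coeff.support.Nonempty) : ℤ :=
  P.coeff.support.sup' h (fun i => ∑ j, (i j - P.coeff.support.inf' h (fun i' => i' j)))

/-- The Laurent degree of a nonzero one-variable Laurent polynomial:
`Ldeg Q = max Supp Q - min Supp Q`. -/
noncomputable def Ldeg1 {K : Type*} [Field K] (Q : AddMonoidAlgebra K ℤ)
    (h : Q.coeff.support.Nonempty) : ℤ :=
  Q.coeff.support.max' h - Q.coeff.support.min' h

theorem Finsupp.support_sum_single_subset_image {α β M N : Type*} [Zero M] [AddCommMonoid N]
    [DecidableEq β] (f : α →₀ M) (g : α → β) (c : α → M → N) :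
    (f.sum fun a m => Finsupp.single (g a) (c a m)).support ⊆ f.support.image g := by
  intro b hb
  obtain ⟨a, ha, hba⟩ := Finset.mem_biUnion.mp (Finsupp.support_sum hb)
  exact Finset.mem_image.mpr
    ⟨a, ha, (Finset.mem_singleton.mp (Finsupp.support_single_subset hba)).symm⟩

theorem Int.abs_le_sup_natAbs {ι : Type*} [Fintype ι] (u : ι → ℤ) (j : ι) :
    |u j| ≤ ((Finset.univ.sup fun j => (u j).natAbs : ℕ) : ℤ) := by
  rw [Int.abs_eq_natAbs]
  exact_mod_cast Finset.le_sup (f := fun j => (u j).natAbs) (Finset.mem_univ j)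

theorem sum_mul_sub_sum_mul_le {ι R : Type*} [Fintype ι] [CommRing R] [LinearOrder R]
    [IsStrictOrderedRing R] {u a b c : ι → R} {m : R} (hu : ∀ j, |u j| ≤ m) (ha : c ≤ a)
    (hb : c ≤ b) :
    ∑ j, u j * a j - ∑ j, u j * b j ≤ m * (∑ j, (a j - c j) + ∑ j, (b j - c j)) := by
  rw [← Finset.sum_sub_distrib, ← Finset.sum_add_distrib, Finset.mul_sum]
  refine Finset.sum_le_sum fun j _ => ?_
  have hdiff : |a j - b j| ≤ (a j - c j) + (b j - c j) := by
    rw [abs_sub_le_iff]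
    have hca := ha j
    have hcb := hb j
    constructor <;> linarith
  calc u j * a j - u j * b j ≤ |u j| * |a j - b j| := by
        rw [← mul_sub, ← abs_mul]
        exact le_abs_self _
    _ ≤ m * ((a j - c j) + (b j - c j)) :=
        mul_le_mul (hu j) hdiff (abs_nonneg _) ((abs_nonneg _).trans (hu j))

section LdegM

variable {K : Type*} [Field K] {n : ℕ} (P : AddMonoidAlgebra K (Fin n → ℤ))
  (hP : P.coeff.support.Nonempty)

theorem inf'_le_of_mem_support {i : Fin n → ℤ} (hi : i ∈ P.coeff.support) :
    (fun j => P.coeff.support.inf' hP (fun i' => i' j)) ≤ i :=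
  fun j => Finset.inf'_le (fun i' => i' j) hi

theorem sum_sub_inf'_le_LdegM {i : Fin n → ℤ} (hi : i ∈ P.coeff.support) :
    ∑ j, (i j - P.coeff.support.inf' hP (fun i' => i' j)) ≤ LdegM P hP :=
  Finset.le_sup'_of_le _ hi le_rfl

end LdegM

/-- Let `P ∈ K[X_1^{±1},…,X_n^{±1}]`, `y ∈ (K*)^n` and `u ∈ ℤ^n`. If the one-variable
Laurent polynomial `Q(Y) = P(y_1 Y^{u_1}, …, y_n Y^{u_n})` is nonzero, then
`Ldeg Q ≤ 2 · |u|_∞ · Ldeg P`. -/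
theorem stmt12 (K : Type*) [Field K] (n : ℕ) (P : AddMonoidAlgebra K (Fin n → ℤ))
    (y : Fin n → Kˣ) (u : Fin n → ℤ) (Q : AddMonoidAlgebra K ℤ)
    (hQ : Q = AddMonoidAlgebra.ofCoeff (P.coeff.sum fun i c =>
      Finsupp.single (∑ j, u j * i j) (c * ∏ j, ((y j : K) ^ i j))))
    (hP : P.coeff.support.Nonempty) (hQne : Q.coeff.support.Nonempty) :
    Ldeg1 Q hQne ≤ 2 * ((Finset.univ.sup fun j => (u j).natAbs : ℕ) : ℤ) * LdegM P hP := by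
  classical
  set m : ℤ := ((Finset.univ.sup fun j => (u j).natAbs : ℕ) : ℤ)
  set c : Fin n → ℤ := fun j => P.coeff.support.inf' hP (fun i' => i' j)
  have hsupp : Q.coeff.support ⊆ P.coeff.support.image fun i => ∑ j, u j * i j :=
    hQ ▸ Finsupp.support_sum_single_subset_image _ _ _
  obtain ⟨i, hi, hmax⟩ := Finset.mem_image.mp (hsupp (Q.coeff.support.max'_mem hQne))
  obtain ⟨i', hi', hmin⟩ := Finset.mem_image.mp (hsupp (Q.coeff.support.min'_mem hQne))
  calc Ldeg1 Q hQne = ∑ j, u j * i j - ∑ j, u j * i' j := by rw [Ldeg1, hmax, hmin]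
    _ ≤ m * (∑ j, (i j - c j) + ∑ j, (i' j - c j)) :=
        sum_mul_sub_sum_mul_le (Int.abs_le_sup_natAbs u) (inf'_le_of_mem_support P hP hi)
          (inf'_le_of_mem_support P hP hi')
    _ ≤ m * (LdegM P hP + LdegM P hP) := by
        gcongr
        · exact sum_sub_inf'_le_LdegM P hP hi
        · exact sum_sub_inf'_le_LdegM P hP hi'
    _ = 2 * m * LdegM P hP := by ring
end

section
/- Let p be a prime and X = {(x,y) ∈ (F̄_p*)² : x + y = 1}, where F̄_p is an algebraic closure of F_p. Then for all T ≥ 1, the number of points (x,y) ∈ X such that (x,y) has order at most T in the group (F̄_p*)² is at most 16·T^{3/2}. -/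
/-!
Every unit of `F̄_p` is a root of unity. If `z = (x, y)` has order `N ≤ T` and `M = ⌊√T⌋`, the
`(M + 1)² > N` products `x ^ i * y ^ j` with `0 ≤ i, j ≤ M` all lie in the group of `N`-th roots
of unity, which has at most `N` elements; two of them coincide, giving a relation
`x ^ a * y ^ b = 1` with `(a, b) ≠ 0` and `|a|, |b| ≤ M`. Substituting `y = 1 - x`, the point is
determined by a root `x` of a nonzero polynomial of degree at most `2M`. There are `4M(M + 1)`
such exponent vectors, so at most `8M²(M + 1) ≤ 16 M³ ≤ 16 T^(3/2)` points.
-/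

open Polynomial Finset

theorem isOfFinOrder_of_isIntegral {F L : Type*} [Field F] [Finite F] [CommRing L] [Algebra F L]
    (x : Lˣ) (hx : IsIntegral F (x : L)) : IsOfFinOrder x := by
  have : Module.Finite F (Algebra.adjoin F {(x : L)}) := .of_fg hx.fg_adjoin_singleton
  have : Finite (Algebra.adjoin F {(x : L)}) := Module.finite_of_finite F
  have hA : (Units.val ⁻¹' (Algebra.adjoin F {(x : L)} : Set L)).Finite :=
    (Set.toFinite _).preimage Units.val_injective.injOn
  refine finite_powers.mp (hA.subset ?_)
  rintro _ ⟨n, rfl⟩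
  rw [Set.mem_preimage, Units.val_pow_eq_pow_val]
  exact pow_mem (Algebra.self_mem_adjoin_singleton F _) n

theorem isMulTorsion_units_algebraicClosure_zmod (p : ℕ) [Fact p.Prime] :
    IsMulTorsion (AlgebraicClosure (ZMod p))ˣ :=
  fun x ↦ isOfFinOrder_of_isIntegral x (Algebra.IsIntegral.isIntegral (R := ZMod p) _)

theorem exists_zpow_mul_zpow_eq_one_of_card_lt {G : Type*} [CommGroup G] [Finite G] {M : ℕ}
    (hG : Nat.card G < (M + 1) ^ 2) (x y : G) :
    ∃ a b : ℤ, (a, b) ≠ 0 ∧ a.natAbs ≤ M ∧ b.natAbs ≤ M ∧ x ^ a * y ^ b = 1 := by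
  have hf : ¬ (fun ij : Fin (M + 1) × Fin (M + 1) ↦ x ^ (ij.1 : ℕ) * y ^ (ij.2 : ℕ)).Injective :=
    fun hinj ↦ (Nat.card_le_card_of_injective _ hinj).not_gt (by simpa [sq] using hG)
  obtain ⟨⟨i, j⟩, ⟨k, l⟩, heq, hne⟩ := Function.not_injective_iff.mp hf
  refine ⟨(i : ℤ) - k, (j : ℤ) - l, ?_, by omega, by omega, ?_⟩
  · simp only [ne_eq, Prod.mk_eq_zero, sub_eq_zero, Nat.cast_inj, Fin.val_inj]
    exact fun h ↦ hne (Prod.ext h.1 h.2)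
  · simp only [zpow_sub, zpow_natCast] at heq ⊢
    rw [mul_mul_mul_comm, ← mul_inv, heq, mul_inv_cancel]

section Relation

variable {K : Type*} [CommRing K]

variable (K) in
/-- The relation `x ^ a * (1 - x) ^ b = 1` with denominators cleared. -/
noncomputable def relationPoly (a b : ℤ) : K[X] :=
  X ^ a.toNat * (1 - X) ^ b.toNat - X ^ (-a).toNat * (1 - X) ^ (-b).toNat

theorem isRoot_relationPoly {a b : ℤ} {x y : Kˣ} (hxy : (x : K) + y = 1)
    (h : x ^ a * y ^ b = 1) : (relationPoly K a b).IsRoot x := by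
  rw [← Int.toNat_sub_toNat_neg a, ← Int.toNat_sub_toNat_neg b, zpow_sub, zpow_sub,
    mul_mul_mul_comm, ← mul_inv, mul_inv_eq_one] at h
  simp only [zpow_natCast] at h
  rw [relationPoly, IsRoot, eval_sub, sub_eq_zero]
  simp only [eval_mul, eval_pow, eval_X, eval_sub, eval_one, ← eq_sub_of_add_eq' hxy]
  exact_mod_cast congrArg Units.val h

variable [IsDomain K]

theorem exists_zpow_mul_zpow_eq_one_of_orderOf_lt {M : ℕ} (z : Kˣ × Kˣ) (hz : IsOfFinOrder z)
    (hN : orderOf z < (M + 1) ^ 2) :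
    ∃ a b : ℤ, (a, b) ≠ 0 ∧ a.natAbs ≤ M ∧ b.natAbs ≤ M ∧ z.1 ^ a * z.2 ^ b = 1 := by
  have : NeZero (orderOf z) := ⟨hz.orderOf_pos.ne'⟩
  have hx : z.1 ∈ rootsOfUnity (orderOf z) K := by
    rw [mem_rootsOfUnity, ← Prod.pow_fst, pow_orderOf_eq_one, Prod.fst_one]
  have hy : z.2 ∈ rootsOfUnity (orderOf z) K := by
    rw [mem_rootsOfUnity, ← Prod.pow_snd, pow_orderOf_eq_one, Prod.snd_one]
  obtain ⟨a, b, hab, ha, hb, h⟩ := exists_zpow_mul_zpow_eq_one_of_card_lt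
    ((card_rootsOfUnity _ _).trans_lt hN) ⟨_, hx⟩ ⟨_, hy⟩
  exact ⟨a, b, hab, ha, hb, by simpa using congrArg Subtype.val h⟩

theorem one_sub_X_ne_zero : (1 - X : K[X]) ≠ 0 := by
  rw [← neg_sub, neg_ne_zero, ← C_1]
  exact X_sub_C_ne_zero 1

theorem X_pow_mul_one_sub_X_pow_ne_zero (i j : ℕ) : (X ^ i * (1 - X) ^ j : K[X]) ≠ 0 :=
  mul_ne_zero (pow_ne_zero _ X_ne_zero) (pow_ne_zero _ one_sub_X_ne_zero)

theorem natDegree_X_pow_mul_one_sub_X_pow (i j : ℕ) :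
    (X ^ i * (1 - X) ^ j : K[X]).natDegree = i + j := by
  have h1X : (1 - X : K[X]).natDegree = 1 := by
    rw [← neg_sub, natDegree_neg, ← C_1, natDegree_X_sub_C]
  rw [natDegree_mul (pow_ne_zero _ X_ne_zero) (pow_ne_zero _ one_sub_X_ne_zero), natDegree_X_pow,
    natDegree_pow, h1X, mul_one]

theorem rootMultiplicity_zero_X_pow_mul_one_sub_X_pow (i j : ℕ) :
    (X ^ i * (1 - X) ^ j : K[X]).rootMultiplicity 0 = i := by
  have hX : (X ^ i : K[X]).rootMultiplicity 0 = i := by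
    simpa using rootMultiplicity_X_sub_C_pow (0 : K) i
  have h1X : ((1 - X) ^ j : K[X]).rootMultiplicity 0 = 0 :=
    rootMultiplicity_eq_zero (by simp)
  rw [rootMultiplicity_mul (X_pow_mul_one_sub_X_pow_ne_zero i j), hX, h1X, add_zero]

theorem X_pow_mul_one_sub_X_pow_injective :
    Function.Injective fun ij : ℕ × ℕ ↦ (X ^ ij.1 * (1 - X) ^ ij.2 : K[X]) := by
  rintro ⟨i, j⟩ ⟨k, l⟩ h
  have hik : i = k := by
    simpa only [rootMultiplicity_zero_X_pow_mul_one_sub_X_pow] using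
      congrArg (rootMultiplicity 0) h
  have hijkl : i + j = k + l := by
    simpa only [natDegree_X_pow_mul_one_sub_X_pow] using congrArg natDegree h
  simp only [Prod.mk.injEq]
  omega

theorem relationPoly_ne_zero {a b : ℤ} (hab : (a, b) ≠ 0) : relationPoly K a b ≠ 0 := by
  have hab' : ¬(a = 0 ∧ b = 0) := fun h ↦ hab (by simp [h.1, h.2])
  have hne : (a.toNat, b.toNat) ≠ ((-a).toNat, (-b).toNat) := by
    rw [Ne, Prod.mk.injEq]
    omega
  have := X_pow_mul_one_sub_X_pow_injective (K := K) |>.ne hne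
  exact sub_ne_zero.mpr this

theorem natDegree_relationPoly_le (a b : ℤ) :
    (relationPoly K a b).natDegree ≤ a.natAbs + b.natAbs := by
  refine (natDegree_sub_le _ _).trans (max_le ?_ ?_) <;>
    rw [natDegree_X_pow_mul_one_sub_X_pow] <;> omega

end Relation

noncomputable def relationBox (M : ℕ) : Finset (ℤ × ℤ) :=
  (Icc (-M : ℤ) M ×ˢ Icc (-M : ℤ) M).erase 0

theorem mem_relationBox {M : ℕ} {a b : ℤ} :
    (a, b) ∈ relationBox M ↔ (a, b) ≠ 0 ∧ a.natAbs ≤ M ∧ b.natAbs ≤ M := by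
  simp only [relationBox, mem_erase, mem_product, mem_Icc]
  exact and_congr_right fun _ ↦ by omega

theorem card_relationBox (M : ℕ) : #(relationBox M) = 4 * M * (M + 1) := by
  have h0 : (0 : ℤ × ℤ) ∈ Icc (-M : ℤ) M ×ˢ Icc (-M : ℤ) M := by simp
  have hsq : (2 * M + 1) * (2 * M + 1) = 4 * M * (M + 1) + 1 := by ring
  rw [relationBox, card_erase_of_mem h0, card_product, Int.card_Icc,
    show ((M : ℤ) + 1 - -M).toNat = 2 * M + 1 by omega, hsq, Nat.add_sub_cancel]

section Roots

variable (K : Type*) [CommRing K] [IsDomain K] [DecidableEq K]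

noncomputable def relationRoots (M : ℕ) : Finset K :=
  (relationBox M).biUnion fun ab ↦ (relationPoly K ab.1 ab.2).roots.toFinset

theorem card_relationRoots_le (M : ℕ) : #(relationRoots K M) ≤ 4 * M * (M + 1) * (2 * M) := by
  rw [← card_relationBox]
  refine card_biUnion_le_card_mul _ _ _ fun ⟨a, b⟩ hab ↦ ?_
  obtain ⟨-, ha, hb⟩ := mem_relationBox.mp hab
  calc #(relationPoly K a b).roots.toFinset ≤ Multiset.card (relationPoly K a b).roots :=
        Multiset.toFinset_card_le _
    _ ≤ (relationPoly K a b).natDegree := card_roots' _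
    _ ≤ 2 * M := (natDegree_relationPoly_le a b).trans (by omega)

variable {K}

theorem val_fst_mem_relationRoots {M : ℕ} {z : Kˣ × Kˣ} (hz : (z.1 : K) + z.2 = 1)
    (hfin : IsOfFinOrder z) (hN : orderOf z < (M + 1) ^ 2) : (z.1 : K) ∈ relationRoots K M := by
  obtain ⟨a, b, hab, ha, hb, h⟩ := exists_zpow_mul_zpow_eq_one_of_orderOf_lt z hfin hN
  refine mem_biUnion.mpr ⟨(a, b), mem_relationBox.mpr ⟨hab, ha, hb⟩, ?_⟩
  rw [Multiset.mem_toFinset, mem_roots (relationPoly_ne_zero hab)]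
  exact isRoot_relationPoly hz h

end Roots

theorem lt_floor_sqrt_add_one_sq (T : ℝ) : T < (⌊√T⌋₊ + 1 : ℕ) ^ 2 := by
  push_cast
  exact (Real.sqrt_lt' (by positivity)).mp (Nat.lt_floor_add_one _)

theorem floor_sqrt_pow_three_le {T : ℝ} (hT : 0 ≤ T) : (⌊√T⌋₊ : ℝ) ^ 3 ≤ T ^ (3 / 2 : ℝ) := by
  rw [Real.rpow_div_two_eq_sqrt _ hT, show (3 : ℝ) = (3 : ℕ) by norm_num, Real.rpow_natCast]
  exact pow_le_pow_left₀ (Nat.cast_nonneg _) (Nat.floor_le (Real.sqrt_nonneg T)) 3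

theorem card_add_eq_one_orderOf_le_le {K : Type*} [CommRing K] [IsDomain K]
    (htors : IsMulTorsion Kˣ) {T : ℝ} (hT : 1 ≤ T) :
    (Nat.card {z : Kˣ × Kˣ // (z.1 : K) + z.2 = 1 ∧ (orderOf z : ℝ) ≤ T} : ℝ)
      ≤ 16 * T ^ (3 / 2 : ℝ) := by
  classical
  set M := ⌊√T⌋₊
  have hM : 1 ≤ M := Nat.le_floor (by simpa using Real.one_le_sqrt.mpr hT)
  have hmem (z : {z : Kˣ × Kˣ // (z.1 : K) + z.2 = 1 ∧ (orderOf z : ℝ) ≤ T}) :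
      (z.1.1 : K) ∈ relationRoots K M := by
    refine val_fst_mem_relationRoots z.2.1 ((htors _).prod_mk (htors _)) ?_
    exact_mod_cast z.2.2.trans_lt (lt_floor_sqrt_add_one_sq T)
  have hinj : Function.Injective fun z ↦ (⟨_, hmem z⟩ : relationRoots K M) := by
    rintro ⟨⟨x, y⟩, hxy, _⟩ ⟨⟨x', y'⟩, hxy', _⟩ h
    have hx : x = x' := Units.ext (congrArg Subtype.val h)
    subst hx
    have hy : y = y' := Units.ext (by linear_combination hxy - hxy')
    subst hy
    rfl
  have hcard := (Nat.card_le_card_of_injective _ hinj).trans_eq (Nat.card_eq_finsetCard _)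
  calc _ ≤ ((4 * M * (M + 1) * (2 * M) : ℕ) : ℝ) :=
        Nat.cast_le.mpr (hcard.trans (card_relationRoots_le K M))
    _ ≤ 16 * (M : ℝ) ^ 3 := by
        have hM2 : (M : ℝ) ^ 2 ≤ (M : ℝ) ^ 3 :=
          pow_le_pow_right₀ (by exact_mod_cast hM) (by norm_num)
        push_cast; nlinarith
    _ ≤ 16 * T ^ (3 / 2 : ℝ) := by
        gcongr; exact floor_sqrt_pow_three_le (by linarith)

/-- Let `p` be a prime and `X = {(x,y) ∈ (F̄_p^*)² : x + y = 1}`. Then for all `T ≥ 1`,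
the number of points of `X` of order at most `T` in the group `(F̄_p^*)²` is at most
`16 · T^(3/2)`. -/
theorem stmt19 (p : ℕ) [Fact p.Prime] (T : ℝ) (hT : 1 ≤ T) :
    (Nat.card {z : (AlgebraicClosure (ZMod p))ˣ × (AlgebraicClosure (ZMod p))ˣ //
        (z.1 : AlgebraicClosure (ZMod p)) + (z.2 : AlgebraicClosure (ZMod p)) = 1 ∧
        (orderOf z : ℝ) ≤ T} : ℝ)
      ≤ 16 * T ^ (3 / 2 : ℝ) :=
  card_add_eq_one_orderOf_le_le (isMulTorsion_units_algebraicClosure_zmod p) hT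
end
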